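/- arXiv:0806.3853 — 3 statements merged into one kernel-verified Lean document; each statement's English description precedes it below -/
import Mathlib

section
/- With f = (1, b_1+1, (b_1+1)(b_2+1), ..., ∏_{i=1}^{m-1}(b_i+1)), the vector b is a vertex (extreme point) of the convex hull of the set {t ∈ Z_{≥0}^m : f·t = f·b}. -/
/-!
Think of `f` as the place values of the mixed radix `(b₁ + 1, b₂ + 1, …)`, so that `b` is the
greedy digit expansion of `N = f · b`. For a nonnegative integer `t` with `f · t = N`, the tail
sum `∑_{j ≥ k} f_j t_j` is a multiple of `f_k` and at most `N`, while `N` exceeds the multiple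
`∑_{j ≥ k} f_j b_j` of `f_k` by `∑_{j < k} f_j b_j = f_k - 1` only; hence every tail sum of `t`
is at most that of `b`, and all are equal only if `t = b`. The sum of all tail sums is therefore
a linear functional that `b` maximizes strictly on `M`, which makes `b` a vertex of its hull.
-/

open Finset

section HalfSpace

variable {𝕜 E : Type*} [Field 𝕜] [LinearOrder 𝕜] [IsStrictOrderedRing 𝕜] [AddCommGroup E]
  [Module 𝕜 E] {S : Set E} {x : E}

theorem convexHull_subset_insert_of_forall_lt (ℓ : E →ₗ[𝕜] 𝕜) (hx : x ∈ S)
    (hlt : ∀ y ∈ S, y ≠ x → ℓ y < ℓ x) : convexHull 𝕜 S ⊆ insert x {y | ℓ y < ℓ x} := by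
  rcases (S \ {x}).eq_empty_or_nonempty with hS | hS
  · rw [Set.sdiff_eq_empty, Set.subset_singleton_iff_eq] at hS
    rcases hS with hS | hS <;> simp [hS]
  have hT : convexHull 𝕜 (S \ {x}) ⊆ {y | ℓ y < ℓ x} :=
    convexHull_min (fun y hy => hlt y hy.1 hy.2) ((convex_Iio _).linear_preimage ℓ)
  rw [← Set.insert_sdiff_self_of_mem hx, convexHull_insert hS]
  intro y hy
  obtain ⟨x', hx', z, hz, hy⟩ := mem_convexJoin.1 hy
  rw [Set.mem_singleton_iff.1 hx'] at hy
  obtain ⟨a, c, -, hc, hac, rfl⟩ := hy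
  rcases hc.eq_or_lt with rfl | hc
  · simp_all
  refine Or.inr (show ℓ (a • x + c • z) < ℓ x from ?_)
  obtain rfl : a = 1 - c := eq_sub_of_add_eq hac
  rw [map_add, map_smul, map_smul, smul_eq_mul, smul_eq_mul]
  linarith [mul_lt_mul_of_pos_left (hT hz) hc]

theorem mem_extremePoints_convexHull_of_forall_lt (ℓ : E →ₗ[𝕜] 𝕜) (hx : x ∈ S)
    (hlt : ∀ y ∈ S, y ≠ x → ℓ y < ℓ x) : x ∈ (convexHull 𝕜 S).extremePoints 𝕜 := by
  have hsub := convexHull_subset_insert_of_forall_lt ℓ hx hlt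
  have hsdiff : convexHull 𝕜 S \ {x} = convexHull 𝕜 S ∩ {y | ℓ y < ℓ x} := by
    ext y
    constructor
    · rintro ⟨hy, hyx⟩
      exact ⟨hy, (hsub hy).resolve_left hyx⟩
    · rintro ⟨hy, hyx⟩
      exact ⟨hy, fun h => (Set.mem_singleton_iff.1 h ▸ hyx).false⟩
  rw [(convex_convexHull 𝕜 S).mem_extremePoints_iff_convex_sdiff, hsdiff]
  exact ⟨subset_convexHull 𝕜 S hx,
    (convex_convexHull 𝕜 S).inter ((convex_Iio _).linear_preimage ℓ)⟩

end HalfSpace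

theorem eq_of_forall_sum_Ici_eq {ι M : Type*} [LinearOrder ι] [LocallyFiniteOrderTop ι]
    [WellFoundedGT ι] [AddCancelCommMonoid M] {u v : ι → M}
    (h : ∀ k, ∑ j ∈ Ici k, u j = ∑ j ∈ Ici k, v j) : u = v := by
  funext k
  induction k using WellFoundedGT.induction with
  | _ k ih =>
    have hk := h k
    rw [← Ioi_insert, sum_insert notMem_Ioi_self, sum_insert notMem_Ioi_self,
      sum_congr rfl fun j hj => ih j (mem_Ioi.1 hj)] at hk
    exact add_right_cancel hk

section MixedRadix

variable {ι : Type*} [LinearOrder ι]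

def placeValue [LocallyFiniteOrderBot ι] (b : ι → ℤ) (j : ι) : ℤ :=
  ∏ i ∈ Iio j, (b i + 1)

variable [LocallyFiniteOrderBot ι] {b : ι → ℤ}

theorem placeValue_pos (hb : ∀ i, 0 ≤ b i) (j : ι) : 0 < placeValue b j :=
  prod_pos fun i _ => by linarith [hb i]

theorem placeValue_dvd_placeValue {j k : ι} (hjk : j ≤ k) : placeValue b j ∣ placeValue b k :=
  prod_dvd_prod_of_subset _ _ _ (Iio_subset_Iio hjk)

theorem sum_Iio_placeValue_mul (k : ι) :
    ∑ j ∈ Iio k, placeValue b j * b j = placeValue b k - 1 := by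
  have h := prod_one_add_ordered (Iio k) b
  simp only [Iio_filter_lt, add_comm (1 : ℤ)] at h
  rw [placeValue, h, add_sub_cancel_right]
  refine sum_congr rfl fun j hj => ?_
  rw [min_eq_right (mem_Iio.1 hj).le, mul_comm, placeValue]

variable [Fintype ι] [LocallyFiniteOrderTop ι]

theorem sum_Iio_add_sum_Ici {M : Type*} [AddCommMonoid M] (g : ι → M) (k : ι) :
    ∑ j ∈ Iio k, g j + ∑ j ∈ Ici k, g j = ∑ j, g j := by
  rw [← sum_filter_add_sum_filter_not univ (· < k)]
  congr 1 <;> congr 1 <;> ext j <;> simp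

theorem sum_Ici_placeValue_mul_le (hb : ∀ i, 0 ≤ b i) {t : ι → ℤ} (ht : ∀ i, 0 ≤ t i)
    (htb : ∑ j, placeValue b j * t j = ∑ j, placeValue b j * b j) (k : ι) :
    ∑ j ∈ Ici k, placeValue b j * t j ≤ ∑ j ∈ Ici k, placeValue b j * b j := by
  set A := ∑ j ∈ Ici k, placeValue b j * t j
  set B := ∑ j ∈ Ici k, placeValue b j * b j
  have hA : A ≤ B + (placeValue b k - 1) := by
    calc A ≤ ∑ j, placeValue b j * t j :=
          sum_le_sum_of_subset_of_nonneg (subset_univ _)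
            fun j _ _ => mul_nonneg (placeValue_pos hb j).le (ht j)
      _ = B + (placeValue b k - 1) := by
          rw [htb, ← sum_Iio_add_sum_Ici, sum_Iio_placeValue_mul, add_comm]
  have hdvd : placeValue b k ∣ A - B := by
    refine dvd_sub (dvd_sum fun j hj => ?_) (dvd_sum fun j hj => ?_) <;>
      exact (placeValue_dvd_placeValue (mem_Ici.1 hj)).mul_right _
  by_contra! hBA
  linarith [Int.le_of_dvd (sub_pos.2 hBA) hdvd]

theorem sum_sum_Ici_placeValue_mul_lt (hb : ∀ i, 0 ≤ b i) {t : ι → ℤ} (ht : ∀ i, 0 ≤ t i)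
    (htb : ∑ j, placeValue b j * t j = ∑ j, placeValue b j * b j) (hne : t ≠ b) :
    ∑ k, ∑ j ∈ Ici k, placeValue b j * t j < ∑ k, ∑ j ∈ Ici k, placeValue b j * b j := by
  have hle := fun k (_ : k ∈ univ) => sum_Ici_placeValue_mul_le hb ht htb k
  refine (sum_le_sum hle).lt_of_ne fun heq => hne ?_
  have hterms := congr_fun <| eq_of_forall_sum_Ici_eq fun k =>
    (sum_eq_sum_iff_of_le hle).1 heq k (mem_univ k)
  exact funext fun j => mul_left_cancel₀ (placeValue_pos hb j).ne' (hterms j)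

end MixedRadix

/-- Lemma 1: `b` is an extreme point of the convex hull of
`M(f, f·b) = {t ∈ ℤ^m_{≥0} : f·t = f·b}`, viewed in `ℝ^m`. -/
theorem stmt1 (m : ℕ) (b : Fin m → ℤ) (hb : ∀ i, 0 ≤ b i)
    (f : Fin m → ℤ) (hf : ∀ j, f j = ∏ i ∈ Finset.Iio j, (b i + 1))
    (M : Set (Fin m → ℝ))
    (hM : M = {x : Fin m → ℝ | (∀ i, ∃ k : ℤ, 0 ≤ k ∧ x i = (k : ℝ)) ∧
        ∑ i, (f i : ℝ) * x i = ∑ i, (f i : ℝ) * (b i : ℝ)}) :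
    (fun i => (b i : ℝ)) ∈ (convexHull ℝ M).extremePoints ℝ := by
  obtain rfl : f = placeValue b := funext hf
  subst hM
  let ℓ : (Fin m → ℝ) →ₗ[ℝ] ℝ := ∑ k, ∑ j ∈ Ici k, (placeValue b j : ℝ) • LinearMap.proj j
  have hℓ (t : Fin m → ℤ) : ℓ (fun i => (t i : ℝ)) =
      ((∑ k, ∑ j ∈ Ici k, placeValue b j * t j : ℤ) : ℝ) := by
    simp [ℓ]
  refine mem_extremePoints_convexHull_of_forall_lt ℓ ⟨fun i => ⟨b i, hb i, rfl⟩, rfl⟩ ?_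
  rintro y ⟨hy, hyb⟩ hne
  choose t ht hyt using hy
  obtain rfl : y = fun i => (t i : ℝ) := funext hyt
  rw [hℓ, hℓ, Int.cast_lt]
  have htb : ∑ j, placeValue b j * t j = ∑ j, placeValue b j * b j := by
    beta_reduce at hyb
    exact_mod_cast hyb
  exact sum_sum_Ici_placeValue_mul_lt hb ht htb fun h => hne (by rw [h])
end

section
/- Let A be a nonnegative integral m×n matrix, b ∈ Z_{≥0}^m, and f = (1, b_1+1, ..., ∏_{i=1}^{m-1}(b_i+1)). If M(A,b) = {x ∈ Z_{≥0}^n : Ax = b} is nonempty, then every vertex of the convex hull of M(A,b) is also a vertex of the convex hull of M(f^T A, f·b) = {x ∈ Z_{≥0}^n : (f^T A)x = f·b}. -/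
private lemma stmt2_sum_Iio_fin {M : Type*} [AddCommMonoid M] {m : ℕ} (g : Fin m → M)
    (g' : ℕ → M) (hg : ∀ i : Fin m, g' i.val = g i) (j : Fin m) :
    ∑ i ∈ Finset.Iio j, g i = ∑ k ∈ Finset.range j.val, g' k := by
  rw [← Nat.Iio_eq_range, ← Fin.map_valEmbedding_Iio, Finset.sum_map]
  exact Finset.sum_congr rfl fun i _ => by simp [hg i]

private lemma stmt2_prod_Iio_fin {M : Type*} [CommMonoid M] {m : ℕ} (g : Fin m → M)
    (g' : ℕ → M) (hg : ∀ i : Fin m, g' i.val = g i) (j : Fin m) :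
    ∏ i ∈ Finset.Iio j, g i = ∏ k ∈ Finset.range j.val, g' k := by
  rw [← Nat.Iio_eq_range, ← Fin.map_valEmbedding_Iio, Finset.prod_map]
  exact Finset.prod_congr rfl fun i _ => by simp [hg i]

private lemma stmt2_tele (g : ℕ → ℤ) : ∀ nn : ℕ,
    ∑ k ∈ Finset.range nn, (∏ l ∈ Finset.range k, g l) * (g k - 1)
      = ∏ l ∈ Finset.range nn, g l - 1
  | 0 => by simp
  | (nn + 1) => by
      rw [Finset.sum_range_succ, Finset.prod_range_succ, stmt2_tele g nn]; ring

/-- Key arithmetic lemma: `b` strictly maximizes the weight functional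
`v ↦ ∑ i, (T+1)^i * v i` among nonnegative integer solutions of `f · v = f · b`. -/
private lemma stmt2_key (m : ℕ) (b f : Fin m → ℤ) (hb : ∀ i, 0 ≤ b i)
    (hf : ∀ j, f j = ∏ i ∈ Finset.Iio j, (b i + 1))
    (v : Fin m → ℤ) (hv : ∀ i, 0 ≤ v i)
    (hsum : ∑ i, f i * v i = ∑ i, f i * b i) (hvb : v ≠ b) :
    ∑ i : Fin m, ((∑ i', f i' * b i') + 1) ^ (i : ℕ) * v i
      < ∑ i : Fin m, ((∑ i', f i' * b i') + 1) ^ (i : ℕ) * b i := by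
  classical
  set T : ℤ := ∑ i, f i * b i with hT
  set w : Fin m → ℤ := fun i => (T + 1) ^ (i : ℕ) with hw
  -- basic positivity
  have hfpos : ∀ j, 0 < f j := by
    intro j
    rw [hf j]
    exact Finset.prod_pos fun i _ => by linarith [hb i]
  have hT0 : 0 ≤ T := Finset.sum_nonneg fun i _ => mul_nonneg (hfpos i).le (hb i)
  have hwpos : ∀ i, 0 < w i := fun i => pow_pos (by linarith) _
  -- auxiliary ℕ-indexed function
  set g' : ℕ → ℤ := fun k => if h : k < m then b ⟨k, h⟩ + 1 else 1 with hg'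
  have hg'val : ∀ i : Fin m, g' i.val = b i + 1 := fun i => by simp [hg', i.isLt]
  have hf' : ∀ j : Fin m, f j = ∏ k ∈ Finset.range j.val, g' k := fun j => by
    rw [hf j]; exact stmt2_prod_Iio_fin _ _ hg'val j
  -- prefix sums of `f · b` telescope
  have hpref : ∀ j : Fin m, ∑ i ∈ Finset.Iio j, f i * b i = f j - 1 := by
    intro j
    have harg : ∀ i : Fin m,
        (∏ l ∈ Finset.range (i : ℕ), g' l) * (g' (i : ℕ) - 1) = f i * b i := by
      intro i
      rw [hg'val i, ← hf' i]; ring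
    have := stmt2_sum_Iio_fin (fun i => f i * b i)
      (fun k => (∏ l ∈ Finset.range k, g' l) * (g' k - 1)) harg j
    rw [this, stmt2_tele g' j.val, ← hf' j]
  -- the largest index where v and b differ
  have hsne : (Finset.univ.filter fun i => v i ≠ b i).Nonempty := by
    by_contra h
    rw [Finset.not_nonempty_iff_eq_empty, Finset.filter_eq_empty_iff] at h
    exact hvb (funext fun i => not_not.mp (h (Finset.mem_univ i)))
  set i0 : Fin m := (Finset.univ.filter fun i => v i ≠ b i).max' hsne with hi0
  have hne0 : v i0 ≠ b i0 := by
    have := Finset.max'_mem _ hsne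
    rw [Finset.mem_filter] at this; exact this.2
  have hmax : ∀ i, i0 < i → v i = b i := by
    intro i hi
    by_contra h
    exact absurd (Finset.le_max' _ i (Finset.mem_filter.mpr ⟨Finset.mem_univ i, h⟩))
      (not_le.mpr hi)
  -- splitting sums at i0
  have hsplit : ∀ u : Fin m → ℤ,
      ∑ i, u i = ∑ i ∈ Finset.Iic i0, u i + ∑ i ∈ Finset.Ioi i0, u i := by
    have hdisj : Disjoint (Finset.Iic i0) (Finset.Ioi i0) := by
      apply Finset.disjoint_left.mpr
      intro a ha1 ha2
      exact absurd (Finset.mem_Iic.mp ha1) (not_le.mpr (Finset.mem_Ioi.mp ha2))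
    have huniv : Finset.Iic i0 ∪ Finset.Ioi i0 = Finset.univ := by
      ext i; simp [le_or_gt]
    intro u
    rw [← huniv, Finset.sum_union hdisj]
  have hIoi : ∀ (c : Fin m → ℤ), ∑ i ∈ Finset.Ioi i0, c i * v i = ∑ i ∈ Finset.Ioi i0, c i * b i :=
    fun c => Finset.sum_congr rfl fun i hi => by rw [hmax i (Finset.mem_Ioi.mp hi)]
  have hpres : ∑ i ∈ Finset.Iic i0, f i * v i = ∑ i ∈ Finset.Iic i0, f i * b i := by
    have h1 := hsplit fun i => f i * v i
    have h2 := hsplit fun i => f i * b i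
    have h3 := hIoi f
    have h4 : ∑ i, f i * v i = ∑ i, f i * b i := hsum
    linarith
  -- value of the prefix of f · b
  have hIic : ∑ i ∈ Finset.Iic i0, f i * b i = f i0 * b i0 + (f i0 - 1) := by
    rw [← Finset.Iio_insert, Finset.sum_insert (by simp), hpref i0]
  -- v i0 < b i0
  have hvi0 : v i0 < b i0 := by
    have hle : f i0 * v i0 ≤ ∑ i ∈ Finset.Iic i0, f i * v i :=
      Finset.single_le_sum (fun i _ => mul_nonneg (hfpos i).le (hv i)) (Finset.mem_Iic.mpr le_rfl)
    rw [hpres, hIic] at hle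
    have : f i0 * v i0 < f i0 * (b i0 + 1) := by nlinarith [hfpos i0]
    have := lt_of_mul_lt_mul_left this (hfpos i0).le
    omega
  -- every v i is at most T
  have hvT : ∀ i, v i ≤ T := by
    intro i
    have h1 : f i * v i ≤ ∑ i, f i * v i :=
      Finset.single_le_sum (fun i _ => mul_nonneg (hfpos i).le (hv i)) (Finset.mem_univ i)
    have h2 : v i ≤ f i * v i := le_mul_of_one_le_left (hv i) (hfpos i)
    rw [hsum] at h1
    exact h2.trans h1
  -- geometric sum bound on the lower weights
  have hgeo : (∑ i ∈ Finset.Iio i0, w i) * T = (T + 1) ^ (i0 : ℕ) - 1 := by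
    have := stmt2_sum_Iio_fin w (fun k => (T + 1) ^ k) (fun i => rfl) i0
    rw [this]
    have := geom_sum_mul (T + 1) i0.val
    simpa using this
  -- lower bound for the Iio part of the difference
  have hlow : ∑ i ∈ Finset.Iio i0, (w i * b i - w i * v i)
      ≥ -((T + 1) ^ (i0 : ℕ) - 1) := by
    have h1 : ∀ i ∈ Finset.Iio i0, -(w i * T) ≤ w i * b i - w i * v i := by
      intro i _
      have : b i - v i ≥ -T := by linarith [hvT i, hb i]
      nlinarith [hwpos i]
    calc -((T + 1) ^ (i0 : ℕ) - 1) = ∑ i ∈ Finset.Iio i0, -(w i * T) := by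
          rw [Finset.sum_neg_distrib, ← hgeo, Finset.sum_mul]
      _ ≤ _ := Finset.sum_le_sum h1
  -- assemble
  have hsum_split : ∑ i, w i * b i - ∑ i, w i * v i
      = ∑ i ∈ Finset.Iic i0, (w i * b i - w i * v i) := by
    rw [hsplit (fun i => w i * b i), hsplit (fun i => w i * v i), hIoi w,
      Finset.sum_sub_distrib]
    ring
  have hIic_split : ∑ i ∈ Finset.Iic i0, (w i * b i - w i * v i)
      = (w i0 * b i0 - w i0 * v i0) + ∑ i ∈ Finset.Iio i0, (w i * b i - w i * v i) := by
    rw [← Finset.Iio_insert, Finset.sum_insert (by simp)]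
  have hmain : w i0 * b i0 - w i0 * v i0 ≥ (T + 1) ^ (i0 : ℕ) := by
    have : b i0 - v i0 ≥ 1 := by omega
    nlinarith [hwpos i0, (rfl : w i0 = (T + 1) ^ (i0 : ℕ))]
  have : ∑ i, w i * b i - ∑ i, w i * v i ≥ 1 := by
    rw [hsum_split, hIic_split]
    linarith
  simpa [hw] using by linarith

/-- Theorem 1: If `M(A,b)` is nonempty, then every extreme point of
`conv M(A,b)` is an extreme point of `conv M(fᵀA, f·b)`. -/
theorem stmt2 (m n : ℕ) (A : Matrix (Fin m) (Fin n) ℤ)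
    (hA : ∀ i j, 0 ≤ A i j) (b : Fin m → ℤ) (hb : ∀ i, 0 ≤ b i)
    (f : Fin m → ℤ) (hf : ∀ j, f j = ∏ i ∈ Finset.Iio j, (b i + 1))
    (MA Mf : Set (Fin n → ℝ))
    (hMA : MA = {x : Fin n → ℝ | (∀ j, ∃ k : ℤ, 0 ≤ k ∧ x j = (k : ℝ)) ∧
        ∀ i, ∑ j, (A i j : ℝ) * x j = (b i : ℝ)})
    (hMf : Mf = {x : Fin n → ℝ | (∀ j, ∃ k : ℤ, 0 ≤ k ∧ x j = (k : ℝ)) ∧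
        ∑ i, (f i : ℝ) * (∑ j, (A i j : ℝ) * x j) = ∑ i, (f i : ℝ) * (b i : ℝ)})
    (hne : MA.Nonempty) :
    (convexHull ℝ MA).extremePoints ℝ ⊆ (convexHull ℝ Mf).extremePoints ℝ := by
  classical
  set T : ℤ := ∑ i, f i * b i with hT
  set w : Fin m → ℤ := fun i => (T + 1) ^ (i : ℕ) with hw
  -- the exposing functional
  set l : (Fin n → ℝ) →L[ℝ] ℝ :=
    ∑ j, ((∑ i, (w i : ℝ) * (A i j : ℝ)) • ContinuousLinearMap.proj j) with hl
  have hlapp : ∀ x : Fin n → ℝ, l x = ∑ i, (w i : ℝ) * (∑ j, (A i j : ℝ) * x j) := by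
    intro x
    rw [hl]
    simp only [ContinuousLinearMap.sum_apply, ContinuousLinearMap.smul_apply,
      ContinuousLinearMap.proj_apply, smul_eq_mul, Finset.sum_mul, Finset.mul_sum]
    rw [Finset.sum_comm]
    exact Finset.sum_congr rfl fun i _ => Finset.sum_congr rfl fun j _ => by ring
  set W : ℝ := ∑ i, (w i : ℝ) * (b i : ℝ) with hWdef
  -- MA ⊆ Mf
  have hsub : MA ⊆ Mf := by
    intro x hx
    rw [hMA] at hx
    rw [hMf]
    exact ⟨hx.1, by simp only [hx.2]⟩
  -- value on MA
  have hval : ∀ p ∈ MA, l p = W := by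
    intro p hp
    rw [hMA] at hp
    rw [hlapp, hWdef]
    exact Finset.sum_congr rfl fun i _ => by rw [hp.2 i]
  -- bound on Mf, with equality iff in MA
  have hbnd : ∀ p ∈ Mf, l p ≤ W ∧ (l p = W → p ∈ MA) := by
    intro p hp
    rw [hMf] at hp
    obtain ⟨hint, heq⟩ := hp
    choose k hk0 hkval using hint
    set v : Fin m → ℤ := fun i => ∑ j, A i j * k j with hv
    have hcast : ∀ i, ∑ j, (A i j : ℝ) * p j = (v i : ℝ) := by
      intro i
      rw [hv]
      push_cast
      exact Finset.sum_congr rfl fun j _ => by rw [hkval j]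
    have hveq : ∑ i, f i * v i = ∑ i, f i * b i := by
      have : ((∑ i, f i * v i : ℤ) : ℝ) = ((∑ i, f i * b i : ℤ) : ℝ) := by
        push_cast
        rw [← heq]
        exact (Finset.sum_congr rfl fun i _ => by rw [hcast i]).symm
      exact_mod_cast this
    have hvnn : ∀ i, 0 ≤ v i :=
      fun i => Finset.sum_nonneg fun j _ => mul_nonneg (hA i j) (hk0 j)
    have hlp : l p = ((∑ i, w i * v i : ℤ) : ℝ) := by
      rw [hlapp]
      push_cast
      exact Finset.sum_congr rfl fun i _ => by rw [hcast i]
    have hWc : W = ((∑ i, w i * b i : ℤ) : ℝ) := by rw [hWdef]; push_cast; ring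
    by_cases hvb : v = b
    · have hmem : p ∈ MA := by
        rw [hMA]
        refine ⟨fun j => ⟨k j, hk0 j, hkval j⟩, fun i => ?_⟩
        rw [hcast i, hvb]
      exact ⟨le_of_eq (hval p hmem), fun _ => hmem⟩
    · have := stmt2_key m b f hb hf v hvnn hveq hvb
      have hlt : l p < W := by
        rw [hlp, hWc]
        exact_mod_cast this
      exact ⟨hlt.le, fun h => absurd h hlt.ne⟩
  -- convex hull inclusions
  have hhull : convexHull ℝ MA ⊆ convexHull ℝ Mf := convexHull_mono hsub
  have hlin : IsLinearMap ℝ fun x : Fin n → ℝ => l x := ⟨l.map_add, l.map_smul⟩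
  have hhalf : convexHull ℝ Mf ⊆ {x | l x ≤ W} :=
    convexHull_min (fun p hp => (hbnd p hp).1) (convex_halfSpace_le hlin W)
  have hplane : convexHull ℝ MA ⊆ {x | l x = W} :=
    convexHull_min (fun p hp => hval p hp) (convex_hyperplane hlin W)
  -- the exposed-face description of conv MA
  have hface : convexHull ℝ MA = {x ∈ convexHull ℝ Mf | ∀ y ∈ convexHull ℝ Mf, l y ≤ l x} := by
    apply Set.Subset.antisymm
    · intro x hx
      refine ⟨hhull hx, fun y hy => ?_⟩
      rw [hplane hx]
      exact hhalf hy
    · rintro x ⟨hx, hmaxx⟩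
      obtain ⟨x₀, hx₀⟩ := hne
      have hW : l x = W := by
        have h1 : W ≤ l x := by
          rw [← hval x₀ hx₀]
          exact hmaxx x₀ (hhull (subset_convexHull ℝ MA hx₀))
        exact le_antisymm (hhalf hx) h1
      rw [convexHull_eq] at hx
      obtain ⟨ι, t, wt, z, hw0, hw1, hz, hcm⟩ := hx
      have hzle : ∀ i ∈ t, wt i * l (z i) ≤ wt i * W :=
        fun i hi => mul_le_mul_of_nonneg_left ((hbnd (z i) (hz i hi)).1) (hw0 i hi)
      have hsum_eq : ∑ i ∈ t, wt i * l (z i) = ∑ i ∈ t, wt i * W := by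
        have h1 : l x = ∑ i ∈ t, wt i * l (z i) := by
          rw [← hcm, Finset.centerMass_eq_of_sum_1 _ _ hw1, map_sum]
          exact Finset.sum_congr rfl fun i _ => by rw [map_smul, smul_eq_mul]
        have h2 : ∑ i ∈ t, wt i * W = W := by
          rw [← Finset.sum_mul, hw1, one_mul]
        rw [← h1, h2, hW]
      have hall := (Finset.sum_eq_sum_iff_of_le hzle).mp hsum_eq
      have hz' : ∀ i ∈ (t.filter fun i => wt i ≠ 0), z i ∈ MA := by
        intro i hi
        rw [Finset.mem_filter] at hi
        have := hall i hi.1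
        have hli : l (z i) = W := mul_left_cancel₀ hi.2 this
        exact (hbnd (z i) (hz i hi.1)).2 hli
      have hcm' : (t.filter fun i => wt i ≠ 0).centerMass wt z = x := by
        rw [Finset.centerMass_filter_ne_zero, hcm]
      rw [← hcm']
      refine Finset.centerMass_mem_convexHull _ (fun i hi => hw0 i (Finset.mem_filter.mp hi).1)
        ?_ hz'
      · rw [Finset.sum_filter_ne_zero, hw1]; exact one_pos
  -- conclude via exposedness
  have hexp : IsExposed ℝ (convexHull ℝ Mf) (convexHull ℝ MA) := fun _ => ⟨l, hface⟩
  exact hexp.isExtreme.extremePoints_subset_extremePoints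
end

section
/- Let A be a nonnegative integral m×n matrix, b ∈ Z_{≥0}^m, a ∈ Z_{≥0}^n, a_0 ∈ Z_{≥0}. Suppose every vertex of the convex hull of M(a, a_0) = {x ∈ Z_{≥0}^n : a·x = a_0} is a vertex of the convex hull of M(A,b) (i.e., V(a, a_0) ⊆ V(A, b) — the aggregation preserves vertices), and let x^0 = (x^0_1, ..., x^0_n) be a vertex of the convex hull of M(A,b) with a·x^0 = a_0. Then a_0 ≥ ∏_{i=1}^n (x^0_i + 1) − 1. -/
/-!
Every point `y` of `M(a, a₀)` supported on `supp a` lies in `conv M(A, b)`: such points are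
finitely many and span a face of `conv M(a, a₀)`, so by Krein–Milman `y` is a convex combination
of vertices of `conv M(a, a₀)`, which are vertices of `conv M(A, b)` by hypothesis. For a vertex
`x⁰` of `conv M(A, b)` and an integral `y ∈ conv M(A, b)` with `0 ≤ 2x⁰ - y`, the reflection
`2x⁰ - y` lies in `M(A, b)`, so `x⁰` is the midpoint of `y` and a point of `M(A, b)`, forcing
`y = x⁰`. Applied to `x⁰` masked to `supp a`, this shows `supp x⁰ ⊆ supp a`; applied to
`x⁰ - t + t'` for `0 ≤ t, t' ≤ x⁰` with `a·t = a·t'`, it gives `t = t'`. So `t ↦ a·t` embeds the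
box `[0, x⁰]`, of size `∏ (x⁰ᵢ + 1)`, into `{0, …, a₀}`.
-/

open Matrix

variable {ι : Type*}

def nonnegIntPoints (ι : Type*) : Set (ι → ℝ) := {x | ∀ j, ∃ k : ℤ, 0 ≤ k ∧ x j = k}

theorem intCast_mem_nonnegIntPoints {y : ι → ℤ} :
    (fun j => (y j : ℝ)) ∈ nonnegIntPoints ι ↔ 0 ≤ y := by
  refine ⟨fun h j => ?_, fun h j => ⟨y j, h j, rfl⟩⟩
  obtain ⟨k, hk, hyk : (y j : ℝ) = k⟩ := h j
  have : (0 : ℝ) ≤ y j := by rw [hyk]; exact_mod_cast hk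
  exact_mod_cast this

theorem nonnegIntPoints_subset_Ici : nonnegIntPoints ι ⊆ Set.Ici 0 := fun x hx j => by
  obtain ⟨k, hk, hxk⟩ := hx j
  simpa [hxk] using hk

def affineSolutions [Fintype ι] {κ : Type*} (A : Matrix κ ι ℝ) (b : κ → ℝ) :
    AffineSubspace ℝ (ι → ℝ) where
  carrier := {x | ∀ i, ∑ j, A i j * x j = b i}
  smul_vsub_vadd_mem' c p₁ p₂ p₃ h₁ h₂ h₃ i := by
    change (A *ᵥ (c • (p₁ - p₂) + p₃)) i = b i
    rw [mulVec_add, mulVec_smul, mulVec_sub]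
    simp only [Pi.add_apply, Pi.smul_apply, Pi.sub_apply, smul_eq_mul]
    rw [show (A *ᵥ p₁) i = b i from h₁ i, show (A *ᵥ p₂) i = b i from h₂ i,
      show (A *ᵥ p₃) i = b i from h₃ i]
    ring

theorem eq_of_mem_extremePoints_of_add_eq_two_smul {E : Type*} [AddCommGroup E] [Module ℝ E]
    {C : Set E} {x y z : E} (hx : x ∈ C.extremePoints ℝ) (hy : y ∈ C) (hz : z ∈ C)
    (h : y + z = (2 : ℝ) • x) : y = x :=
  hx.2 hy hz ⟨1 / 2, 1 / 2, by norm_num, by norm_num, by norm_num, by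
    rw [← smul_add, h, smul_smul]; norm_num⟩

theorem Set.Finite.convexHull_extremePoints_convexHull {E : Type*} [NormedAddCommGroup E]
    [NormedSpace ℝ E] {S : Set E} (hS : S.Finite) :
    convexHull ℝ ((convexHull ℝ S).extremePoints ℝ) = convexHull ℝ S := by
  have hfin : ((convexHull ℝ S).extremePoints ℝ).Finite :=
    hS.subset extremePoints_convexHull_subset
  rw [← (hfin.isClosed_convexHull ℝ).closure_eq]
  exact closure_convexHull_extremePoints (hS.isCompact_convexHull ℝ) (convex_convexHull ℝ S)

theorem convexHull_inter_pi_zero_subset {M : Set (ι → ℝ)} (hM : M ⊆ Set.Ici 0) (Z : Set ι) :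
    convexHull ℝ M ∩ Z.pi (fun _ => {0}) ⊆ convexHull ℝ (M ∩ Z.pi fun _ => {0}) := by
  classical
  rintro _ ⟨hx, hxZ⟩
  rw [convexHull_eq] at hx
  obtain ⟨κ, t, w, z, hw₀, hw₁, hzM, rfl⟩ := hx
  rw [← Finset.centerMass_filter_ne_zero]
  refine Finset.centerMass_mem_convexHull _ (fun i hi => hw₀ i (Finset.mem_filter.1 hi).1)
    (by rw [Finset.sum_filter_ne_zero, hw₁]; exact one_pos) fun i hi => ?_
  obtain ⟨hit, hwi⟩ := Finset.mem_filter.1 hi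
  refine ⟨hzM i hit, fun j hj => ?_⟩
  have hsum : ∑ k ∈ t, w k * z k j = 0 := by
    simpa [Finset.centerMass_eq_of_sum_1 _ _ hw₁, Finset.sum_apply] using hxZ j hj
  have := (Finset.sum_eq_zero_iff_of_nonneg fun k hk =>
    mul_nonneg (hw₀ k hk) (hM (hzM k hk) j)).1 hsum i hit
  exact (mul_eq_zero.1 this).resolve_left hwi

theorem isExtreme_convexHull_inter_pi_zero {M : Set (ι → ℝ)} (hM : M ⊆ Set.Ici 0) (Z : Set ι) :
    IsExtreme ℝ (convexHull ℝ M) (convexHull ℝ (M ∩ Z.pi fun _ => {0})) := by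
  refine ⟨convexHull_mono Set.inter_subset_left, fun x hx y hy z hz hxyz => ?_⟩
  have hnonneg : convexHull ℝ M ⊆ Set.Ici 0 := convexHull_min hM (convex_Ici 0)
  have hzZ : z ∈ Z.pi fun _ => ({0} : Set ℝ) :=
    convexHull_min Set.inter_subset_right (convex_pi fun _ _ => convex_singleton 0) hz
  refine convexHull_inter_pi_zero_subset hM Z ⟨hx, fun j hj => ?_⟩
  obtain ⟨c, d, hc, hd, -, rfl⟩ := hxyz
  have hsum : c * x j + d * y j = 0 := hzZ j hj
  have hxj : 0 ≤ x j := hnonneg hx j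
  have hyj : 0 ≤ y j := hnonneg hy j
  show x j = 0
  nlinarith

theorem finite_nonnegIntPoints_inter_pi_zero [Fintype ι] {a : ι → ℤ} (ha : 0 ≤ a) (a₀ : ℤ) :
    (nonnegIntPoints ι ∩ {x | ∑ j, (a j : ℝ) * x j = a₀} ∩
      {j | a j = 0}.pi fun _ => {0}).Finite := by
  classical
  refine ((Set.finite_Icc (0 : ι → ℤ) fun _ => a₀).image fun k j => (k j : ℝ)).subset ?_
  rintro x ⟨⟨hint, hsum⟩, hzero⟩
  choose k hk₀ hkx using hint
  obtain rfl : x = fun j => (k j : ℝ) := funext hkx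
  have hsum' : ∑ j, (a j : ℝ) * k j = a₀ := hsum
  have hka : a ⬝ᵥ k = a₀ := by unfold dotProduct; exact_mod_cast hsum'
  refine ⟨k, ⟨hk₀, fun j => ?_⟩, rfl⟩
  by_cases haj : a j = 0
  · have hkj : (k j : ℝ) = 0 := hzero j haj
    have hkj' : k j = 0 := by exact_mod_cast hkj
    show k j ≤ a₀
    rw [hkj', ← hka]
    exact dotProduct_nonneg_of_nonneg ha hk₀
  · have haj' : 1 ≤ a j := by have : (0 : ℤ) ≤ a j := ha j; omega
    calc k j ≤ a j * k j := le_mul_of_one_le_left (hk₀ j) haj'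
      _ ≤ a ⬝ᵥ k := Finset.single_le_sum (f := fun j => a j * k j)
          (fun i _ => mul_nonneg (ha i) (hk₀ i)) (Finset.mem_univ j)
      _ = a₀ := hka

theorem intCast_mem_convexHull_of_extremePoints_subset [Fintype ι] {a : ι → ℤ} (ha : 0 ≤ a)
    {a₀ : ℤ} {N : Set (ι → ℝ)}
    (hV : (convexHull ℝ (nonnegIntPoints ι ∩ {x | ∑ j, (a j : ℝ) * x j = a₀})).extremePoints ℝ ⊆
      convexHull ℝ N)
    {y : ι → ℤ} (hy : 0 ≤ y) (hya : a ⬝ᵥ y = a₀) (hsupp : ∀ j, a j = 0 → y j = 0) :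
    (fun j => (y j : ℝ)) ∈ convexHull ℝ N := by
  set M := nonnegIntPoints ι ∩ {x | ∑ j, (a j : ℝ) * x j = a₀}
  set F : Set (ι → ℝ) := {j | a j = 0}.pi fun _ => {0}
  have hM : M ⊆ Set.Ici 0 := Set.inter_subset_left.trans nonnegIntPoints_subset_Ici
  have hyMF : (fun j => (y j : ℝ)) ∈ M ∩ F :=
    ⟨⟨intCast_mem_nonnegIntPoints.2 hy, show ∑ j, (a j : ℝ) * y j = a₀ by exact_mod_cast hya⟩,
      fun j hj => by simp [hsupp j hj]⟩
  -- `M ∩ F` is finite and spans a face of `conv M`, so Krein–Milman applies to it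
  suffices convexHull ℝ (M ∩ F) ⊆ convexHull ℝ N from this (subset_convexHull ℝ _ hyMF)
  calc convexHull ℝ (M ∩ F)
      = convexHull ℝ ((convexHull ℝ (M ∩ F)).extremePoints ℝ) :=
        ((finite_nonnegIntPoints_inter_pi_zero ha a₀).convexHull_extremePoints_convexHull).symm
    _ ⊆ convexHull ℝ ((convexHull ℝ M).extremePoints ℝ) :=
        convexHull_mono (isExtreme_convexHull_inter_pi_zero hM _).extremePoints_subset_extremePoints
    _ ⊆ convexHull ℝ N := convexHull_min hV (convex_convexHull ℝ N)

theorem eq_of_mem_convexHull_of_le_two_smul {L : AffineSubspace ℝ (ι → ℝ)} {x y : ι → ℤ}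
    (hx : (fun j => (x j : ℝ)) ∈ (convexHull ℝ (nonnegIntPoints ι ∩ L)).extremePoints ℝ)
    (hy : (fun j => (y j : ℝ)) ∈ convexHull ℝ (nonnegIntPoints ι ∩ L)) (hyx : y ≤ 2 • x) :
    y = x := by
  have hxL : (fun j => (x j : ℝ)) ∈ L := (extremePoints_convexHull_subset hx).2
  have hyL : (fun j => (y j : ℝ)) ∈ L := convexHull_min Set.inter_subset_right L.convex hy
  -- the reflection `w` of `y` through `x` is again a lattice point of `L`
  set w := 2 • x - y
  have hw : (fun j => (w j : ℝ)) ∈ nonnegIntPoints ι ∩ L := by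
    refine ⟨intCast_mem_nonnegIntPoints.2 (sub_nonneg.2 hyx), ?_⟩
    rw [SetLike.mem_coe]
    convert L.smul_vsub_vadd_mem 1 hxL hyL hxL using 1
    ext j
    simp only [nsmul_eq_mul, Nat.cast_ofNat, Pi.sub_apply, Pi.mul_apply, Pi.ofNat_apply,
      Int.cast_sub, Int.cast_mul, Int.cast_ofNat, vsub_eq_sub, one_smul, Pi.vadd_apply',
      vadd_eq_add, w]
    ring
  have hcast := eq_of_mem_extremePoints_of_add_eq_two_smul hx hy (subset_convexHull ℝ _ hw) (by
    ext j
    simp [w])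
  ext j
  exact_mod_cast congrFun hcast j

section

variable [Fintype ι] {a x₀ : ι → ℤ} {S : Set (ι → ℤ)}

theorem eq_zero_of_coeff_eq_zero (hx₀ : 0 ≤ x₀)
    (hmem : ∀ y, 0 ≤ y → a ⬝ᵥ y = a ⬝ᵥ x₀ → (∀ j, a j = 0 → y j = 0) → y ∈ S)
    (heq : ∀ y ∈ S, y ≤ 2 • x₀ → y = x₀) {j : ι} (hj : a j = 0) : x₀ j = 0 := by
  classical
  set u : ι → ℤ := fun j => if a j = 0 then 0 else x₀ j
  have hu₀ : 0 ≤ u := fun j => by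
    have : 0 ≤ x₀ j := hx₀ j
    by_cases h : a j = 0 <;> simp [u, h, this]
  have hua : a ⬝ᵥ u = a ⬝ᵥ x₀ :=
    Finset.sum_congr rfl fun j _ => by by_cases h : a j = 0 <;> simp [u, h]
  have hux : u ≤ 2 • x₀ := fun j => by
    have : 0 ≤ x₀ j := hx₀ j
    by_cases h : a j = 0 <;> simp only [u, h, ↓reduceIte, Pi.smul_apply, two_nsmul] <;> omega
  have := congrFun (heq u (hmem u hu₀ hua fun j hj => by simp [u, hj]) hux) j
  simpa [u, hj, eq_comm] using this

theorem injOn_dotProduct_Icc (hsupp : ∀ j, a j = 0 → x₀ j = 0)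
    (hmem : ∀ y, 0 ≤ y → a ⬝ᵥ y = a ⬝ᵥ x₀ → (∀ j, a j = 0 → y j = 0) → y ∈ S)
    (heq : ∀ y ∈ S, y ≤ 2 • x₀ → y = x₀) : Set.InjOn (a ⬝ᵥ ·) (Set.Icc 0 x₀) := by
  rintro t ⟨ht₀, htx⟩ t' ⟨ht'₀, ht'x⟩ (htt' : a ⬝ᵥ t = a ⬝ᵥ t')
  have hbox j : 0 ≤ t j ∧ t j ≤ x₀ j ∧ 0 ≤ t' j ∧ t' j ≤ x₀ j :=
    ⟨ht₀ j, htx j, ht'₀ j, ht'x j⟩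
  have hy : x₀ - t + t' = x₀ := by
    refine heq _ (hmem _ (fun j => ?_) ?_ fun j hj => ?_) fun j => ?_
    · have := hbox j
      simp only [Pi.zero_apply, Pi.add_apply, Pi.sub_apply]
      omega
    · rw [dotProduct_add, dotProduct_sub, htt', sub_add_cancel]
    · have := hbox j
      have := hsupp j hj
      simp only [Pi.add_apply, Pi.sub_apply]
      omega
    · have := hbox j
      simp only [Pi.add_apply, Pi.sub_apply, Pi.smul_apply, two_nsmul]
      omega
  ext j
  have := congrFun hy j
  simp only [Pi.add_apply, Pi.sub_apply] at this
  omega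

end

theorem prod_add_one_le_dotProduct_add_one [Fintype ι] [DecidableEq ι] {a x : ι → ℤ}
    (ha : 0 ≤ a) (hx : 0 ≤ x) (hinj : Set.InjOn (a ⬝ᵥ ·) (Set.Icc 0 x)) :
    ∏ i, (x i + 1) ≤ a ⬝ᵥ x + 1 := by
  have hmaps : Set.MapsTo (a ⬝ᵥ ·) (Finset.Icc 0 x) (Finset.Icc 0 (a ⬝ᵥ x)) := by
    intro t ht
    rw [Finset.coe_Icc] at ht
    exact Finset.mem_Icc.2 ⟨dotProduct_nonneg_of_nonneg ha ht.1,
      dotProduct_le_dotProduct_of_nonneg_left ht.2 ha⟩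
  have hcard := Finset.card_le_card_of_injOn _ hmaps (by rwa [Finset.coe_Icc])
  rw [Pi.card_Icc] at hcard
  simp only [Int.card_Icc, Pi.zero_apply, sub_zero] at hcard
  have hprod : ∏ i, (x i + 1) = ((∏ i, (x i + 1).toNat : ℕ) : ℤ) := by
    push_cast
    refine Finset.prod_congr rfl fun i _ => (Int.toNat_of_nonneg ?_).symm
    have : 0 ≤ x i := hx i
    omega
  have hax : 0 ≤ a ⬝ᵥ x + 1 := by have := dotProduct_nonneg_of_nonneg ha hx; omega
  rw [hprod, ← Int.toNat_of_nonneg hax]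
  exact_mod_cast hcard

theorem stmt7_general (m n : ℕ) (A : Matrix (Fin m) (Fin n) ℤ)
    (b : Fin m → ℤ)
    (a : Fin n → ℤ) (ha : ∀ i, 0 ≤ a i) (a0 : ℤ)
    (MA Ma : Set (Fin n → ℝ))
    (hMA : MA = {x : Fin n → ℝ | (∀ j, ∃ k : ℤ, 0 ≤ k ∧ x j = (k : ℝ)) ∧
        ∀ i, ∑ j, (A i j : ℝ) * x j = (b i : ℝ)})
    (hMa : Ma = {x : Fin n → ℝ | (∀ j, ∃ k : ℤ, 0 ≤ k ∧ x j = (k : ℝ)) ∧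
        ∑ j, (a j : ℝ) * x j = (a0 : ℝ)})
    (hVV : (convexHull ℝ Ma).extremePoints ℝ ⊆ (convexHull ℝ MA).extremePoints ℝ)
    (x0 : Fin n → ℤ)
    (hx0V : (fun j => (x0 j : ℝ)) ∈ (convexHull ℝ MA).extremePoints ℝ)
    (hx0a : ∑ j, a j * x0 j = a0) :
    (∏ i, (x0 i + 1)) - 1 ≤ a0 := by
  subst hMa hx0a
  set L := affineSolutions (Matrix.of fun i j => (A i j : ℝ)) (fun i => b i)
  obtain rfl : MA = nonnegIntPoints (Fin n) ∩ L := hMA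
  set S : Set (Fin n → ℤ) := {y | (fun j => (y j : ℝ)) ∈ convexHull ℝ (nonnegIntPoints _ ∩ L)}
  have hx0 : 0 ≤ x0 := intCast_mem_nonnegIntPoints.1 (extremePoints_convexHull_subset hx0V).1
  have hmem : ∀ y, 0 ≤ y → a ⬝ᵥ y = a ⬝ᵥ x0 → (∀ j, a j = 0 → y j = 0) → y ∈ S :=
    fun _ hy hya hsupp => intCast_mem_convexHull_of_extremePoints_subset ha
      (hVV.trans extremePoints_subset) hy hya hsupp
  have heq : ∀ y ∈ S, y ≤ 2 • x0 → y = x0 :=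
    fun y hy hyx => eq_of_mem_convexHull_of_le_two_smul hx0V hy hyx
  have hsupp j (hj : a j = 0) : x0 j = 0 := eq_zero_of_coeff_eq_zero hx0 hmem heq hj
  exact sub_le_iff_le_add.2 <|
    prod_add_one_le_dotProduct_add_one ha hx0 (injOn_dotProduct_Icc hsupp hmem heq)

/-- Theorem 3: If aggregation `(a, a₀)` preserves vertices,
`V(a,a₀) ⊆ V(A,b)`, and `x⁰ ∈ V(A,b)` with `a·x⁰ = a₀`, then
`a₀ ≥ ∏ (x⁰ᵢ + 1) − 1`. -/
theorem stmt7 (m n : ℕ) (A : Matrix (Fin m) (Fin n) ℤ)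
    (hA : ∀ i j, 0 ≤ A i j) (b : Fin m → ℤ) (hb : ∀ i, 0 ≤ b i)
    (a : Fin n → ℤ) (ha : ∀ i, 0 ≤ a i) (a0 : ℤ) (ha0 : 0 ≤ a0)
    (MA Ma : Set (Fin n → ℝ))
    (hMA : MA = {x : Fin n → ℝ | (∀ j, ∃ k : ℤ, 0 ≤ k ∧ x j = (k : ℝ)) ∧
        ∀ i, ∑ j, (A i j : ℝ) * x j = (b i : ℝ)})
    (hMa : Ma = {x : Fin n → ℝ | (∀ j, ∃ k : ℤ, 0 ≤ k ∧ x j = (k : ℝ)) ∧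
        ∑ j, (a j : ℝ) * x j = (a0 : ℝ)})
    (hVV : (convexHull ℝ Ma).extremePoints ℝ ⊆ (convexHull ℝ MA).extremePoints ℝ)
    (x0 : Fin n → ℤ) (hx0 : ∀ j, 0 ≤ x0 j)
    (hx0V : (fun j => (x0 j : ℝ)) ∈ (convexHull ℝ MA).extremePoints ℝ)
    (hx0a : ∑ j, a j * x0 j = a0) :
    (∏ i, (x0 i + 1)) - 1 ≤ a0 :=
  stmt7_general m n A b a ha a0 MA Ma hMA hMa hVV x0 hx0V hx0a
end
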